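/- arXiv:2404.04559 — 9 statements merged into one kernel-verified Lean document; each statement's English description precedes it below -/
import Mathlib

section
/- Let U ∈ ℝ^{N×N} be an orthogonal matrix (UᵀU = I) and let F, Z* ∈ ℝ^{N×C}. If there exist indices n ∈ {1,…,N} and c ∈ {1,…,C} with (Uᵀ F)_{nc} = 0 and (Uᵀ Z*)_{nc} ≠ 0, then for every vector g ∈ ℝ^N, U·diag(g)·Uᵀ·F ≠ Z*. -/
open Matrix BigOperators

theorem stmt2 (N C : ℕ) (U : Matrix (Fin N) (Fin N) ℝ) (hU : Uᵀ * U = 1)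
    (F Zstar : Matrix (Fin N) (Fin C) ℝ) (n : Fin N) (c : Fin C)
    (hF : (Uᵀ * F) n c = 0) (hZ : (Uᵀ * Zstar) n c ≠ 0) :
    ∀ g : Fin N → ℝ, U * Matrix.diagonal g * Uᵀ * F ≠ Zstar := by
  intro g h
  apply hZ
  rw [← h]
  have : Uᵀ * (U * Matrix.diagonal g * Uᵀ * F)
      = Matrix.diagonal g * (Uᵀ * F) := by
    rw [show U * Matrix.diagonal g * Uᵀ * F = U * (Matrix.diagonal g * (Uᵀ * F)) by
      simp [Matrix.mul_assoc], ← Matrix.mul_assoc, hU, Matrix.one_mul]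
  rw [this, Matrix.diagonal_mul, hF, mul_zero]
end

section
/- Let U ∈ ℝ^{N×N} be an orthogonal matrix (UᵀU = I) and let F, Z* ∈ ℝ^{N×C}. If there exist indices n ∈ {1,…,N} and c ∈ {1,…,C} with (Uᵀ F)_{nc} = 0 and (Uᵀ Z*)_{nc} ≠ 0, then for every family of vectors g^{(1)},…,g^{(C)} ∈ ℝ^N there exists a column index c' ∈ {1,…,C} such that the c'-th column of Z* differs from U·diag(g^{(c')})·Uᵀ applied to the c'-th column of F. (Paradigm (III) graph convolution cannot construct Z* for any choice of the per-column filters.) -/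
open Matrix BigOperators

theorem stmt4 (N C : ℕ) (U : Matrix (Fin N) (Fin N) ℝ) (hU : Uᵀ * U = 1)
    (F Zstar : Matrix (Fin N) (Fin C) ℝ) (n : Fin N) (c : Fin C)
    (hF : (Uᵀ * F) n c = 0) (hZ : (Uᵀ * Zstar) n c ≠ 0) :
    ∀ g : Fin C → Fin N → ℝ, ∃ c' : Fin C,
      (fun i => Zstar i c') ≠
        (U * Matrix.diagonal (g c') * Uᵀ).mulVec (fun i => F i c') := by
  intro g
  refine ⟨c, fun h => hZ ?_⟩
  have hv : Uᵀ.mulVec (fun i => F i c) n = 0 := by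
    simpa [Matrix.mulVec, Matrix.mul_apply, dotProduct] using hF
  have h2 : Uᵀ.mulVec (fun i => Zstar i c) =
      (Matrix.diagonal (g c) * Uᵀ).mulVec (fun i => F i c) := by
    rw [h, Matrix.mulVec_mulVec, ← Matrix.mul_assoc, ← Matrix.mul_assoc, hU,
      Matrix.one_mul]
  have h3 : (Uᵀ * Zstar) n c = g c n * Uᵀ.mulVec (fun i => F i c) n := by
    have := congrFun h2 n
    simpa [Matrix.mulVec, Matrix.mul_apply, dotProduct, Matrix.diagonal,
      Finset.mul_sum, mul_assoc] using this
  rw [h3, hv, mul_zero]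
end

section
/- Let F̂, Ẑ* ∈ ℝ^{N×C} be matrices with rank(Ẑ*) > 2·rank(F̂). Then for all vectors p, q ∈ ℝ^N and all matrices W, V ∈ ℝ^{C×C}, diag(p)·F̂·W + diag(q)·F̂·V ≠ Ẑ*. (The sum of two Paradigm (II) spectral graph convolutions cannot construct the target output Ẑ* for any parameter values.) -/
open Matrix BigOperators

lemma myrank_add_le {N C : ℕ} (A B : Matrix (Fin N) (Fin C) ℝ) :
    (A + B).rank ≤ A.rank + B.rank := by
  have hr : LinearMap.range (A + B).mulVecLin ≤
      LinearMap.range A.mulVecLin ⊔ LinearMap.range B.mulVecLin := by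
    rw [Matrix.mulVecLin_add]
    rintro x ⟨v, rfl⟩
    exact Submodule.add_mem_sup ⟨v, rfl⟩ ⟨v, rfl⟩
  calc (A + B).rank ≤ Module.finrank ℝ
        (LinearMap.range A.mulVecLin ⊔ LinearMap.range B.mulVecLin : Submodule ℝ (Fin N → ℝ)) :=
        Submodule.finrank_mono hr
    _ ≤ A.rank + B.rank := Submodule.finrank_add_le_finrank_add_finrank _ _

theorem stmt6 (N C : ℕ) (F Zstar : Matrix (Fin N) (Fin C) ℝ)
    (hrank : 2 * F.rank < Zstar.rank) :
    ∀ (p q : Fin N → ℝ) (W V : Matrix (Fin C) (Fin C) ℝ),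
      Matrix.diagonal p * F * W + Matrix.diagonal q * F * V ≠ Zstar := by
  intro p q W V h
  have h1 : (Matrix.diagonal p * F * W).rank ≤ F.rank :=
    le_trans (Matrix.rank_mul_le_left _ _) (Matrix.rank_mul_le_right _ _)
  have h2 : (Matrix.diagonal q * F * V).rank ≤ F.rank :=
    le_trans (Matrix.rank_mul_le_left _ _) (Matrix.rank_mul_le_right _ _)
  have := myrank_add_le (Matrix.diagonal p * F * W) (Matrix.diagonal q * F * V)
  rw [h] at this
  omega
end

section
/- Let U ∈ ℝ^{N×N} be an orthogonal matrix (UᵀU = I) and let F, Z* ∈ ℝ^{N×C}. If there exist indices n ∈ {1,…,N} and c ∈ {1,…,C} with (Uᵀ F)_{nc} = 0 and (Uᵀ Z*)_{nc} ≠ 0, then for all families of vectors p^{(1)},…,p^{(C)} ∈ ℝ^N and q^{(1)},…,q^{(C)} ∈ ℝ^N there exists a column index c' such that the c'-th column of Z* differs from U·diag(p^{(c')})·Uᵀ·F_{:c'} + U·diag(q^{(c')})·Uᵀ·F_{:c'}. (The sum of two Paradigm (III) convolutions still fails to construct the target output in these cases.) -/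
open Matrix BigOperators

theorem stmt8 (N C : ℕ) (U : Matrix (Fin N) (Fin N) ℝ) (hU : Uᵀ * U = 1)
    (F Zstar : Matrix (Fin N) (Fin C) ℝ) (n : Fin N) (c : Fin C)
    (hF : (Uᵀ * F) n c = 0) (hZ : (Uᵀ * Zstar) n c ≠ 0) :
    ∀ p q : Fin C → Fin N → ℝ, ∃ c' : Fin C,
      (fun i => Zstar i c') ≠
        (U * Matrix.diagonal (p c') * Uᵀ).mulVec (fun i => F i c')
          + (U * Matrix.diagonal (q c') * Uᵀ).mulVec (fun i => F i c') := by
  intro p q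
  refine ⟨c, fun h => hZ ?_⟩
  have key : ∀ D : Matrix (Fin N) (Fin N) ℝ, ∀ v : Fin N → ℝ,
      Uᵀ.mulVec ((U * D * Uᵀ).mulVec v) = D.mulVec (Uᵀ.mulVec v) := by
    intro D v
    rw [mulVec_mulVec, ← mul_assoc, ← mul_assoc, hU, one_mul, ← mulVec_mulVec]
  have h2 := congrArg (fun v => (Uᵀ.mulVec v) n) h
  simp only [mulVec_add, Pi.add_apply, key] at h2
  have hUF : Uᵀ.mulVec (fun i => F i c) n = (Uᵀ * F) n c := by
    simp [mulVec, dotProduct, mul_apply]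
  have hUZ : Uᵀ.mulVec (fun i => Zstar i c) n = (Uᵀ * Zstar) n c := by
    simp [mulVec, dotProduct, mul_apply]
  rw [hUZ] at h2
  rw [h2]
  rw [show (Matrix.diagonal (p c)).mulVec (Uᵀ.mulVec fun i => F i c) n
      = p c n * (Uᵀ * F) n c by rw [mulVec_diagonal, hUF],
    show (Matrix.diagonal (q c)).mulVec (Uᵀ.mulVec fun i => F i c) n
      = q c n * (Uᵀ * F) n c by rw [mulVec_diagonal, hUF], hF]
  ring
end

section
/- Suppose N ≥ 2 and C ≥ 3. Then there exist matrices F̂, Ẑ* ∈ ℝ^{N×C} with no zero row in F̂, such that for all vectors g, q ∈ ℝ^N, all families p^{(1)},…,p^{(C)} ∈ ℝ^N, and all matrices W ∈ ℝ^{C×C}, there exist indices n ∈ {1,…,N} and c ∈ {1,…,C} with Ẑ*_{nc} ≠ (g_n + p^{(c)}_n)·F̂_{nc} + q_n·(Σ_{j=1}^{C} F̂_{nj}·W_{jc}). (Even the sum of all three convolution paradigms (I)+(II)+(III) fails to construct certain target outputs for all parameter values.) -/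
open Matrix BigOperators

theorem stmt10 (N C : ℕ) (hN : 2 ≤ N) (hC : 3 ≤ C) :
    ∃ F Zstar : Matrix (Fin N) (Fin C) ℝ,
      (∀ n : Fin N, ∃ c : Fin C, F n c ≠ 0) ∧
      ∀ (g q : Fin N → ℝ) (p : Fin C → Fin N → ℝ) (W : Matrix (Fin C) (Fin C) ℝ),
        ∃ (n : Fin N) (c : Fin C),
          Zstar n c ≠ (g n + p c n) * F n c + q n * ∑ j, F n j * W j c := by
  have c0 : Fin C := ⟨0, by omega⟩
  refine ⟨fun _ c => if c = (⟨0, by omega⟩ : Fin C) then 1 else 0,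
    fun n c => if ((n : ℕ) = 0 ∧ (c : ℕ) = 1) ∨ ((n : ℕ) = 1 ∧ (c : ℕ) = 2) then 1 else 0,
    fun n => ⟨⟨0, by omega⟩, by simp⟩, ?_⟩
  intro g q p W
  by_contra h
  push_neg at h
  have hsum : ∀ (n : Fin N) (c : Fin C),
      (∑ j, (if j = (⟨0, by omega⟩ : Fin C) then (1 : ℝ) else 0) * W j c)
        = W ⟨0, by omega⟩ c := by
    intro n c
    rw [Finset.sum_eq_single (⟨0, by omega⟩ : Fin C)]
    · simp
    · intro b _ hb; simp [hb]
    · simp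
  have key : ∀ (n : Fin N) (c : Fin C), (n : ℕ) ≤ 1 → 1 ≤ (c : ℕ) →
      (if ((n : ℕ) = 0 ∧ (c : ℕ) = 1) ∨ ((n : ℕ) = 1 ∧ (c : ℕ) = 2) then (1 : ℝ) else 0)
        = q n * W ⟨0, by omega⟩ c := by
    intro n c hn hc
    have := h n c
    have hne : c ≠ (⟨0, by omega⟩ : Fin C) := by
      intro hce
      have : (c : ℕ) = 0 := by simpa using congrArg Fin.val hce
      omega
    rw [hsum n c] at this
    simpa [hne] using this
  have n0 : Fin N := ⟨0, by omega⟩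
  have e1 := key ⟨0, by omega⟩ ⟨1, by omega⟩ (by simp) (by simp)
  have e2 := key ⟨0, by omega⟩ ⟨2, by omega⟩ (by simp) (by simp)
  have e3 := key ⟨1, by omega⟩ ⟨1, by omega⟩ (by simp) (by simp)
  have e4 := key ⟨1, by omega⟩ ⟨2, by omega⟩ (by simp) (by simp)
  simp only [] at e1 e2 e3 e4
  norm_num at e1 e2 e3 e4
  rcases e2 with h2 | h2
  · rw [h2, zero_mul] at e1
    exact one_ne_zero e1
  · rcases e3 with h3 | h3
    · rw [h3, zero_mul] at e4
      exact one_ne_zero e4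
    · rw [h3, mul_zero] at e1
      exact one_ne_zero e1
end

section
/- Let U ∈ ℝ^{N×N} be an orthogonal matrix (UᵀU = I) and let F ∈ ℝ^{N×C} be such that no row of Uᵀ F is zero (F is nontrivial on frequency). Then for every target matrix Z* ∈ ℝ^{N×C} there exists a family of filters g^{(c,j)} ∈ ℝ^N (c, j ∈ {1,…,C}) such that for every column index c: Z*_{:c} = Σ_{j=1}^{C} U·diag(g^{(c,j)})·Uᵀ·F_{:j}. (The 2-D graph convolution can always construct any target output with zero construction error.) -/
open Matrix BigOperators

theorem stmt14 (N C : ℕ) (U : Matrix (Fin N) (Fin N) ℝ) (hU : Uᵀ * U = 1)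
    (F : Matrix (Fin N) (Fin C) ℝ)
    (hF : ∀ n : Fin N, ∃ j : Fin C, (Uᵀ * F) n j ≠ 0) :
    ∀ Zstar : Matrix (Fin N) (Fin C) ℝ, ∃ g : Fin C → Fin C → Fin N → ℝ,
      ∀ c : Fin C, (fun i => Zstar i c)
        = ∑ j, (U * Matrix.diagonal (g c j) * Uᵀ).mulVec (fun i => F i j) := by
  intro Zstar
  have hUUt : U * Uᵀ = 1 := by
    rw [mul_eq_one_comm] at hU; exact hU
  choose jn hjn using hF
  set g : Fin C → Fin C → Fin N → ℝ :=
    fun c j n => if j = jn n then (Uᵀ * Zstar) n c / (Uᵀ * F) n (jn n) else 0 with hg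
  refine ⟨g, ?_⟩
  intro c
  funext i
  have key : ∀ n : Fin N, (∑ j, g c j n * (Uᵀ * F) n j) = (Uᵀ * Zstar) n c := by
    intro n
    rw [Finset.sum_eq_single (jn n)]
    · simp [hg, div_mul_cancel₀ _ (hjn n)]
    · intro b _ hb; simp [hg, hb]
    · simp
  have lhs : Zstar i c = ∑ n, U i n * (Uᵀ * Zstar) n c := by
    conv_lhs => rw [show Zstar = (U * Uᵀ) * Zstar by rw [hUUt, Matrix.one_mul]]
    rw [Matrix.mul_assoc, Matrix.mul_apply]
  rw [lhs]
  rw [Finset.sum_apply]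
  simp only [Matrix.mulVec, dotProduct, Matrix.mul_apply, Matrix.mul_diagonal,
    Matrix.transpose_apply]
  calc ∑ n, U i n * (Uᵀ * Zstar) n c
      = ∑ n, U i n * (∑ j, g c j n * (Uᵀ * F) n j) := by
        refine Finset.sum_congr rfl fun n _ => by rw [key n]
    _ = ∑ n, ∑ j, ∑ k, U i n * g c j n * U k n * F k j := by
        refine Finset.sum_congr rfl fun n _ => ?_
        rw [Finset.mul_sum]
        refine Finset.sum_congr rfl fun j _ => ?_
        rw [Matrix.mul_apply, Finset.mul_sum, Finset.mul_sum]
        refine Finset.sum_congr rfl fun k _ => ?_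
        simp [Matrix.transpose_apply]; ring
    _ = ∑ j, ∑ k, ∑ n, U i n * g c j n * U k n * F k j := by
        rw [Finset.sum_comm]
        refine Finset.sum_congr rfl fun j _ => Finset.sum_comm
    _ = ∑ j, ∑ k, (∑ n, U i n * g c j n * U k n) * F k j := by
        refine Finset.sum_congr rfl fun j _ => Finset.sum_congr rfl fun k _ => ?_
        rw [Finset.sum_mul]
    _ = ∑ j, ∑ k, (∑ m, (∑ n, U i n * Matrix.diagonal (g c j) n m) * U k m) * F k j := by
        refine Finset.sum_congr rfl fun j _ => Finset.sum_congr rfl fun k _ => ?_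
        congr 1
        refine Finset.sum_congr rfl fun m _ => ?_
        congr 1
        rw [Finset.sum_eq_single m]
        · simp [Matrix.diagonal_apply_eq]
        · intro b _ hb; simp [Matrix.diagonal_apply_ne _ hb]
        · simp
end

section
/- Let N, C ≥ 1, fix indices n ∈ {1,…,N} and c, j ∈ {1,…,C}, and fix a constant a ∈ ℝ. Then there exist matrices F̂, Ẑ* ∈ ℝ^{N×C} with no zero row in F̂, such that every family of filters g^{(c',j')} ∈ ℝ^N (c', j' ∈ {1,…,C}) satisfying the constraint g^{(c,j)}_n = a admits indices m ∈ {1,…,N} and k ∈ {1,…,C} with Ẑ*_{mk} ≠ Σ_{i=1}^{C} g^{(k,i)}_m · F̂_{mi}. (Fixing any single parameter of 2-D graph convolution to a constant destroys the ability to construct arbitrary target outputs.) -/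
open Matrix BigOperators

theorem stmt16 (N C : ℕ) (n : Fin N) (c j : Fin C) (a : ℝ) :
    ∃ F Zstar : Matrix (Fin N) (Fin C) ℝ,
      (∀ m : Fin N, ∃ i : Fin C, F m i ≠ 0) ∧
      ∀ g : Fin C → Fin C → Fin N → ℝ, g c j n = a →
        ∃ (m : Fin N) (k : Fin C), Zstar m k ≠ ∑ i, g k i m * F m i := by
  refine ⟨fun _ i => if i = j then 1 else 0, fun _ _ => a + 1, fun m => ⟨j, by simp⟩, ?_⟩
  intro g hg
  refine ⟨n, c, ?_⟩
  have : ∑ i, g c i n * (if i = j then (1:ℝ) else 0) = g c j n := by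
    simp [mul_ite]
  rw [this, hg]
  intro h
  simp only at h
  linarith
end

section
/- Let N, C ≥ 2, let n ≠ n' be indices in {1,…,N}, and let c ≠ c' and j ≠ j' be indices in {1,…,C}. Then there exist matrices F̂, Ẑ* ∈ ℝ^{N×C} with no zero row in F̂, such that every family of filters g^{(c'',j'')} ∈ ℝ^N satisfying the sharing constraint g^{(c,j)}_n = g^{(c',j')}_{n'} admits indices m ∈ {1,…,N} and k ∈ {1,…,C} with Ẑ*_{mk} ≠ Σ_{i=1}^{C} g^{(k,i)}_m · F̂_{mi}. (Sharing any two parameters of 2-D graph convolution destroys the ability to construct arbitrary target outputs; the parameter count of 2-D graph convolution is irreducible.) -/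
open Matrix BigOperators

theorem stmt17 (N C : ℕ) (n n' : Fin N) (hn : n ≠ n')
    (c c' : Fin C) (hc : c ≠ c') (j j' : Fin C) (hj : j ≠ j') :
    ∃ F Zstar : Matrix (Fin N) (Fin C) ℝ,
      (∀ m : Fin N, ∃ i : Fin C, F m i ≠ 0) ∧
      ∀ g : Fin C → Fin C → Fin N → ℝ, g c j n = g c' j' n' →
        ∃ (m : Fin N) (k : Fin C), Zstar m k ≠ ∑ i, g k i m * F m i := by
  refine ⟨fun m i => if m = n then (if i = j then 1 else 0)
      else if m = n' then (if i = j' then 1 else 0) else 1,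
    fun m k => if m = n' ∧ k = c' then 1 else 0, ?_, ?_⟩
  · intro m
    by_cases h1 : m = n
    · exact ⟨j, by simp [h1]⟩
    by_cases h2 : m = n'
    · exact ⟨j', by simp [h1, h2, Ne.symm hn]⟩
    · exact ⟨j, by simp [h1, h2]⟩
  · intro g hg
    by_contra h
    push_neg at h
    have h1 := h n c
    have h2 := h n' c'
    simp [hn, hn.symm, hc, hc.symm, Finset.sum_ite_eq'] at h1 h2
    rw [hg] at h1
    rw [← h1] at h2
    norm_num at h2
end

section
/- Let K be a field, let A ∈ K^{n×n}, B ∈ K^{m×m}, and C ∈ K^{n×m}. Then there exist matrices X, Y ∈ K^{n×m} with A·X − Y·B = C if and only if the block matrices [[A, C],[0, B]] and [[A, 0],[0, B]] (both of size (n+m)×(n+m)) are equivalent, i.e., there exist invertible matrices P, Q ∈ K^{(n+m)×(n+m)} with P·[[A, C],[0, B]]·Q = [[A, 0],[0, B]]. (Roth's solvability criterion for the generalized Sylvester matrix equation.) -/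
/-!
If `A X - Y B = C`, the unitriangular matrices `[[1, Y], [0, 1]]` and `[[1, -X], [0, 1]]` clear
the corner: `[[1, Y], [0, 1]] [[A, C], [0, B]] [[1, -X], [0, 1]] = [[A, 0], [0, B]]`.

Conversely, equivalent matrices have the same rank, and projecting the range of `[[A, C], [0, B]]`
onto the second block gives `rank [[A, C], [0, B]] = rank B + dim (im A + C (ker B))`. Comparing
with the case `C = 0` forces `C (ker B) ⊆ im A`. This inclusion is enough: lifting `C` through
`A` on `ker B` and extending gives `X` such that `C - A X` vanishes on `ker B`, so it factors
through `B`.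
-/

open Matrix Module LinearMap

section

variable {K V V' W U U' : Type*} [DivisionRing K] [AddCommGroup V] [Module K V]
  [AddCommGroup V'] [Module K V'] [AddCommGroup W] [Module K W] [AddCommGroup U] [Module K U]
  [AddCommGroup U'] [Module K U']

theorem LinearMap.exists_comp_eq_of_ker_le (f : V →ₗ[K] V') (g : V →ₗ[K] W)
    (h : ker f ≤ ker g) :
    ∃ y : V' →ₗ[K] W, y ∘ₗ f = g := by
  obtain ⟨s, hs⟩ := exists_leftInverse_of_injective ((ker f).liftQ f le_rfl)
    (Submodule.ker_liftQ_eq_bot _ _ _ le_rfl)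
  refine ⟨(ker f).liftQ g h ∘ₗ s, LinearMap.ext fun v => ?_⟩
  have hsv : s (f v) = Submodule.Quotient.mk v := congr($hs (Submodule.Quotient.mk v))
  simp [hsv]

theorem LinearMap.exists_comp_eq_of_range_le (f : V →ₗ[K] W) (g : U →ₗ[K] W)
    (h : range g ≤ range f) :
    ∃ x : U →ₗ[K] V, f ∘ₗ x = g := by
  obtain ⟨s, hs⟩ := exists_rightInverse_of_surjective f.rangeRestrict (range_rangeRestrict f)
  refine ⟨s ∘ₗ g.codRestrict (range f) (fun u => h ⟨u, rfl⟩), LinearMap.ext fun u => ?_⟩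
  exact congr(Subtype.val ($hs (g.codRestrict (range f) (fun u => h ⟨u, rfl⟩) u)))

theorem LinearMap.exists_comp_add_comp_eq_of_map_ker_le (a : V →ₗ[K] W) (b : U →ₗ[K] U')
    (c : U →ₗ[K] W) (h : (ker b).map c ≤ range a) :
    ∃ (x : U →ₗ[K] V) (y : U' →ₗ[K] W), a ∘ₗ x + y ∘ₗ b = c := by
  obtain ⟨x₀, hx₀⟩ := exists_comp_eq_of_range_le a (c ∘ₗ (ker b).subtype)
    (by rwa [range_comp, Submodule.range_subtype])
  obtain ⟨x, rfl⟩ := exists_extend x₀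
  obtain ⟨y, hy⟩ := exists_comp_eq_of_ker_le b (c - a ∘ₗ x) fun u hu => by
    simpa [sub_eq_zero] using congr($hx₀ ⟨u, hu⟩).symm
  exact ⟨x, y, by rw [hy, add_sub_cancel]⟩

theorem Submodule.finrank_map_add_finrank_inf_ker (p : Submodule K V) [FiniteDimensional K p]
    (f : V →ₗ[K] W) : finrank K (p.map f) + finrank K ↥(p ⊓ ker f) = finrank K p := by
  rw [← finrank_range_add_finrank_ker (f.domRestrict p), range_domRestrict, ker_domRestrict,
    ← Submodule.finrank_map_subtype_eq p, Submodule.map_comap_subtype]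

theorem LinearMap.range_coprod_prod_inf_ker_snd (a : V →ₗ[K] W) (b : U →ₗ[K] U')
    (c : U →ₗ[K] W) :
    range ((a.coprod c).prod (b ∘ₗ snd K V U)) ⊓ ker (snd K W U') =
      (range a ⊔ (ker b).map c).map (inl K W U') := by
  ext ⟨w, u'⟩
  simp only [Submodule.mem_inf, mem_range, mem_ker, Submodule.mem_map, Submodule.mem_sup]
  constructor
  · rintro ⟨⟨⟨v, u⟩, hvu⟩, rfl⟩
    obtain ⟨rfl, hu⟩ := Prod.ext_iff.mp hvu
    exact ⟨_, ⟨a v, ⟨v, rfl⟩, c u, ⟨u, hu, rfl⟩, rfl⟩, rfl⟩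
  · rintro ⟨_, ⟨_, ⟨v, rfl⟩, _, ⟨u, hu, rfl⟩, rfl⟩, hw⟩
    obtain ⟨rfl, rfl⟩ := Prod.ext_iff.mp hw
    exact ⟨⟨⟨v, u⟩, by simpa using hu⟩, rfl⟩

theorem LinearMap.finrank_range_coprod_prod [FiniteDimensional K V] [FiniteDimensional K U]
    (a : V →ₗ[K] W) (b : U →ₗ[K] U') (c : U →ₗ[K] W) :
    finrank K (range ((a.coprod c).prod (b ∘ₗ snd K V U))) =
      finrank K (range b) + finrank K ↥(range a ⊔ (ker b).map c) := by
  rw [← Submodule.finrank_map_add_finrank_inf_ker _ (snd K W U'), range_coprod_prod_inf_ker_snd,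
    ← range_comp, snd_prod, range_comp_of_range_eq_top _ (range_eq_top.mpr snd_surjective),
    (Submodule.equivMapOfInjective _ inl_injective _).finrank_eq.symm]

end

namespace Matrix

variable {l n p q : Type*} [Fintype n] [Fintype q] {F : Type*} [Field F]

theorem mulVecLin_fromBlocks_zero₂₁ (A : Matrix l n F) (B : Matrix p q F) (C : Matrix l q F) :
    (fromBlocks A C 0 B).mulVecLin =
      (LinearEquiv.sumArrowLequivProdArrow l p F F).symm.toLinearMap ∘ₗ
        (A.mulVecLin.coprod C.mulVecLin).prod (B.mulVecLin ∘ₗ snd F _ _) ∘ₗ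
        (LinearEquiv.sumArrowLequivProdArrow n q F F).toLinearMap := by
  ext x (i | i) <;> simp [fromBlocks_mulVec] <;> rfl

theorem rank_fromBlocks_zero₂₁ (A : Matrix l n F) (B : Matrix p q F) (C : Matrix l q F) :
    (fromBlocks A C 0 B).rank =
      B.rank + finrank F ↥(range A.mulVecLin ⊔ (ker B.mulVecLin).map C.mulVecLin) := by
  rw [Matrix.rank, mulVecLin_fromBlocks_zero₂₁, range_comp, LinearEquiv.finrank_map_eq,
    LinearEquiv.range_comp, finrank_range_coprod_prod]
  rfl

theorem exists_mul_sub_mul_eq_of_map_ker_le [Fintype p]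
    (A : Matrix l n F) (B : Matrix p q F) (C : Matrix l q F)
    (h : (ker B.mulVecLin).map C.mulVecLin ≤ range A.mulVecLin) :
    ∃ (X : Matrix n q F) (Y : Matrix l p F), A * X - Y * B = C := by
  classical
  obtain ⟨x, y, hxy⟩ := LinearMap.exists_comp_add_comp_eq_of_map_ker_le _ _ _ h
  refine ⟨toMatrix' x, -toMatrix' y, toLin'.injective ?_⟩
  rw [map_sub, toLin'_mul, toLin'_mul, map_neg, toLin'_toMatrix', toLin'_toMatrix', neg_comp,
    sub_neg_eq_add, toLin'_apply', toLin'_apply', toLin'_apply', hxy]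

theorem isUnit_fromBlocks_one_zero_one [Fintype l] [DecidableEq l] [Fintype p] [DecidableEq p]
    (Y : Matrix l p F) : IsUnit (fromBlocks (1 : Matrix l l F) Y 0 (1 : Matrix p p F)) := by
  simp [isUnit_iff_isUnit_det]

theorem fromBlocks_one_mul_fromBlocks_mul_fromBlocks_one [Fintype l] [DecidableEq l] [Fintype p]
    [DecidableEq p] [DecidableEq n] [DecidableEq q] {A : Matrix l n F} {B : Matrix p q F}
    {C : Matrix l q F} {X : Matrix n q F} {Y : Matrix l p F} (h : A * X - Y * B = C) :
    (fromBlocks 1 Y 0 1 : Matrix (l ⊕ p) (l ⊕ p) F) * fromBlocks A C 0 B *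
      (fromBlocks 1 (-X) 0 1 : Matrix (n ⊕ q) (n ⊕ q) F) = fromBlocks A 0 0 B := by
  simp [fromBlocks_multiply, ← h]

end Matrix

theorem stmt19 (K : Type*) [Field K] (n m : ℕ)
    (A : Matrix (Fin n) (Fin n) K) (B : Matrix (Fin m) (Fin m) K)
    (C : Matrix (Fin n) (Fin m) K) :
    (∃ X Y : Matrix (Fin n) (Fin m) K, A * X - Y * B = C) ↔
    (∃ P Q : Matrix (Fin n ⊕ Fin m) (Fin n ⊕ Fin m) K, IsUnit P ∧ IsUnit Q ∧
      P * Matrix.fromBlocks A C 0 B * Q = Matrix.fromBlocks A 0 0 B) := by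
  constructor
  · rintro ⟨X, Y, h⟩
    exact ⟨_, _, isUnit_fromBlocks_one_zero_one Y, isUnit_fromBlocks_one_zero_one (-X),
      fromBlocks_one_mul_fromBlocks_mul_fromBlocks_one h⟩
  · rintro ⟨P, Q, hP, hQ, hPQ⟩
    have hrank : (fromBlocks A C 0 B).rank = (fromBlocks A 0 0 B).rank := by
      rw [← hPQ, rank_mul_eq_left_of_isUnit_det _ _ ((isUnit_iff_isUnit_det Q).mp hQ),
        rank_mul_eq_right_of_isUnit_det _ _ ((isUnit_iff_isUnit_det P).mp hP)]
    rw [rank_fromBlocks_zero₂₁, rank_fromBlocks_zero₂₁, mulVecLin_zero, Submodule.map_zero,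
      sup_bot_eq, Nat.add_left_cancel_iff] at hrank
    exact exists_mul_sub_mul_eq_of_map_ker_le A B C
      (sup_eq_left.mp (Submodule.eq_of_le_of_finrank_eq le_sup_left hrank.symm).symm)
end
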